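/- Let p > 1 and δ ≥ 0, and set φ(t) = ∫₀ᵗ (δ+s)^{p-2} s ds with Fenchel conjugate φ*(t) = sup_{s≥0}(st − φ(s)). Then there exist constants c, C > 0 depending only on p such that for all t ≥ 0: c·(δ^{p-1} + t)^{p'-2} t² ≤ φ*(t) ≤ C·(δ^{p-1} + t)^{p'-2} t², where p' = p/(p−1). -/

import Mathlib

/-!
Write `g s = (δ + s) ^ (p - 2) * s` for the integrand, so that `φ' = g`. As `g` is increasing,
`g (s / 2) * (s / 2) ≤ φ s ≤ g s * s`. Hence `φ* t` is of order `v * t` for any `v` with `g v`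
comparable to `t`: if `g v ≤ t / 2`, testing the supremum at `s = v` gives `φ* t ≥ v * t / 2`;
if `g v ≥ 2 * t`, then `s * t ≤ φ s` for `s ≥ 2 * v`, so `φ* t ≤ 2 * v * t`.

With `ρ ^ (p - 1) = δ ^ (p - 1) + t`, the point `u = ρ ^ (2 - p) * t`, which equals
`(δ ^ (p - 1) + t) ^ (p' - 2) * t`, satisfies `g u = ((δ + u) / ρ) ^ (p - 2) * t`, where
`(δ + u) / ρ` lies between two constants depending only on `p`. The scaling inequality
`μ ^ min 1 (p - 1) * g s ≤ g (μ * s)` for `μ ≥ 1` then shows that `v = Λ * u` and `v = Λ⁻¹ * u`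
satisfy the two conditions above for a large constant `Λ`, and `u * t` is exactly
`(δ ^ (p - 1) + t) ^ (p' - 2) * t ^ 2`.
-/

/-- `φ(t) = ∫₀ᵗ (δ+s)^(p-2) s ds`. -/
noncomputable def phiFn (p δ t : ℝ) : ℝ :=
  ∫ s in (0:ℝ)..t, (δ + s) ^ (p - 2) * s

/-- The Fenchel conjugate `ψ*(t) = sup_{s ≥ 0} (s t − ψ s)`. -/
noncomputable def fconj (ψ : ℝ → ℝ) (t : ℝ) : ℝ :=
  sSup ((fun s => s * t - ψ s) '' Set.Ici 0)

open Real Set Filter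

lemma min_rpow_le_rpow {m x M : ℝ} (r : ℝ) (hm : 0 < m) (hmx : m ≤ x) (hxM : x ≤ M) :
    min (m ^ r) (M ^ r) ≤ x ^ r := by
  rcases le_total 0 r with hr | hr
  · exact (min_le_left _ _).trans (rpow_le_rpow hm.le hmx hr)
  · exact (min_le_right _ _).trans (rpow_le_rpow_of_nonpos (hm.trans_le hmx) hxM hr)

lemma rpow_le_max_rpow {m x M : ℝ} (r : ℝ) (hm : 0 < m) (hmx : m ≤ x) (hxM : x ≤ M) :
    x ^ r ≤ max (m ^ r) (M ^ r) := by
  rcases le_total 0 r with hr | hr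
  · exact (rpow_le_rpow (hm.le.trans hmx) hxM hr).trans (le_max_right _ _)
  · exact (rpow_le_rpow_of_nonpos hm hmx hr).trans (le_max_left _ _)

lemma fconj_le {ψ : ℝ → ℝ} {t B : ℝ} (h : ∀ s ≥ 0, s * t - ψ s ≤ B) : fconj ψ t ≤ B :=
  csSup_le (nonempty_Ici.image _) (forall_mem_image.2 h)

lemma le_fconj {ψ : ℝ → ℝ} {t B s : ℝ} (h : ∀ s ≥ 0, s * t - ψ s ≤ B) (hs : 0 ≤ s) :
    s * t - ψ s ≤ fconj ψ t :=
  le_csSup ⟨B, forall_mem_image.2 h⟩ (mem_image_of_mem _ hs)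

noncomputable def phiFnDeriv (p δ s : ℝ) : ℝ := (δ + s) ^ (p - 2) * s

/-- Up to factors depending only on `p`, the point where `phiFnDeriv p δ` takes the value `t`. -/
noncomputable def dualVar (p δ t : ℝ) : ℝ := (δ ^ (p - 1) + t) ^ (p / (p - 1) - 2) * t

section

variable {p δ : ℝ}

lemma phiFnDeriv_zero : phiFnDeriv p δ 0 = 0 := by simp [phiFnDeriv]

lemma phiFnDeriv_nonneg (hδ : 0 ≤ δ) {s : ℝ} (hs : 0 ≤ s) : 0 ≤ phiFnDeriv p δ s :=
  mul_nonneg (rpow_nonneg (by linarith) _) hs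

lemma rpow_mul_phiFnDeriv_le (hδ : 0 ≤ δ) {μ s : ℝ} (hμ : 1 ≤ μ) (hs : 0 ≤ s) :
    μ ^ min 1 (p - 1) * phiFnDeriv p δ s ≤ phiFnDeriv p δ (μ * s) := by
  unfold phiFnDeriv
  rcases le_total 2 p with hp2 | hp2
  · rw [min_eq_left (by linarith), rpow_one]
    calc μ * ((δ + s) ^ (p - 2) * s) = (δ + s) ^ (p - 2) * (μ * s) := by ring
      _ ≤ (δ + μ * s) ^ (p - 2) * (μ * s) := by
        gcongr
        nlinarith
  · rw [min_eq_right (by linarith)]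
    rcases (add_nonneg hδ hs).eq_or_lt with h0 | h0
    · obtain rfl : s = 0 := by linarith
      simp
    · have hμ0 : 0 < μ := zero_lt_one.trans_le hμ
      have hδμs : (μ * (δ + s)) ^ (p - 2) ≤ (δ + μ * s) ^ (p - 2) :=
        rpow_le_rpow_of_nonpos (by nlinarith) (by nlinarith) (by linarith)
      calc μ ^ (p - 1) * ((δ + s) ^ (p - 2) * s) = (μ * (δ + s)) ^ (p - 2) * (μ * s) := by
            rw [mul_rpow (by linarith) h0.le, show p - 1 = p - 2 + 1 by ring,
              rpow_add_one hμ0.ne']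
            ring
        _ ≤ (δ + μ * s) ^ (p - 2) * (μ * s) := by gcongr

lemma phiFnDeriv_monotoneOn (hp : 1 < p) (hδ : 0 ≤ δ) :
    MonotoneOn (phiFnDeriv p δ) (Ici 0) := by
  intro a ha b hb hab
  rcases (mem_Ici.mp ha).eq_or_lt with rfl | ha0
  · rw [phiFnDeriv_zero]
    exact phiFnDeriv_nonneg hδ hb
  · have hba : 1 ≤ b / a := (one_le_div ha0).mpr hab
    calc phiFnDeriv p δ a ≤ (b / a) ^ min 1 (p - 1) * phiFnDeriv p δ a :=
          le_mul_of_one_le_left (phiFnDeriv_nonneg hδ ha0.le)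
            (one_le_rpow hba (le_min zero_le_one (by linarith)))
      _ ≤ phiFnDeriv p δ (b / a * a) := rpow_mul_phiFnDeriv_le hδ hba ha0.le
      _ = phiFnDeriv p δ b := by rw [div_mul_cancel₀ _ ha0.ne']

lemma intervalIntegrable_phiFnDeriv (hp : 1 < p) (hδ : 0 ≤ δ) {a b : ℝ} (ha : 0 ≤ a)
    (hb : 0 ≤ b) : IntervalIntegrable (phiFnDeriv p δ) MeasureTheory.volume a b :=
  ((phiFnDeriv_monotoneOn hp hδ).mono fun _ hx => (le_min ha hb).trans hx.1).intervalIntegrable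

lemma phiFn_eq_integral (t : ℝ) : phiFn p δ t = ∫ s in (0:ℝ)..t, phiFnDeriv p δ s := rfl

lemma phiFn_nonneg (hδ : 0 ≤ δ) {t : ℝ} (ht : 0 ≤ t) : 0 ≤ phiFn p δ t :=
  intervalIntegral.integral_nonneg ht fun _ hs => phiFnDeriv_nonneg hδ hs.1

lemma phiFn_le_phiFnDeriv_mul (hp : 1 < p) (hδ : 0 ≤ δ) {t : ℝ} (ht : 0 ≤ t) :
    phiFn p δ t ≤ phiFnDeriv p δ t * t := by
  have h := intervalIntegral.integral_mono_on ht (intervalIntegrable_phiFnDeriv hp hδ le_rfl ht)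
    intervalIntegrable_const fun s hs => phiFnDeriv_monotoneOn hp hδ hs.1 ht hs.2
  simpa [phiFn_eq_integral, mul_comm] using h

lemma phiFnDeriv_mul_sub_le_phiFn (hp : 1 < p) (hδ : 0 ≤ δ) {a t : ℝ} (ha : 0 ≤ a)
    (hat : a ≤ t) : phiFnDeriv p δ a * (t - a) ≤ phiFn p δ t := by
  have hint := intervalIntegrable_phiFnDeriv hp hδ ha (ha.trans hat)
  rw [phiFn_eq_integral, ← intervalIntegral.integral_add_adjacent_intervals
    (intervalIntegrable_phiFnDeriv hp hδ le_rfl ha) hint]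
  have hinit : 0 ≤ ∫ s in (0:ℝ)..a, phiFnDeriv p δ s := phiFn_nonneg hδ ha
  have htail := intervalIntegral.integral_mono_on hat intervalIntegrable_const hint
    fun s hs => phiFnDeriv_monotoneOn hp hδ ha (ha.trans hs.1) hs.1
  rw [intervalIntegral.integral_const, smul_eq_mul, mul_comm] at htail
  linarith

lemma mul_div_two_le_mul_sub_phiFn (hp : 1 < p) (hδ : 0 ≤ δ) {t v : ℝ} (hv : 0 ≤ v)
    (hvt : phiFnDeriv p δ v ≤ t / 2) : v * t / 2 ≤ v * t - phiFn p δ v := by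
  have := phiFn_le_phiFnDeriv_mul hp hδ hv
  nlinarith

lemma mul_sub_phiFn_le (hp : 1 < p) (hδ : 0 ≤ δ) {t v s : ℝ} (ht : 0 ≤ t) (hv : 0 ≤ v)
    (hvt : 2 * t ≤ phiFnDeriv p δ v) (hs : 0 ≤ s) : s * t - phiFn p δ s ≤ 2 * v * t := by
  rcases le_total s (2 * v) with hsv | hvs
  · nlinarith [phiFn_nonneg (p := p) hδ hs]
  · have hst : s * t ≤ phiFn p δ s :=
      calc s * t ≤ phiFnDeriv p δ v * (s - s / 2) := by nlinarith
        _ ≤ phiFnDeriv p δ (s / 2) * (s - s / 2) := by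
          gcongr
          · linarith
          · exact phiFnDeriv_monotoneOn hp hδ hv (mem_Ici.mpr (by linarith)) (by linarith)
        _ ≤ phiFn p δ s := phiFnDeriv_mul_sub_le_phiFn hp hδ (by linarith) (by linarith)
    nlinarith

lemma phiFnDeriv_rpow_mul_eq (hδ : 0 ≤ δ) {ρ t : ℝ} (hρ : 0 < ρ) (ht : 0 ≤ t) :
    phiFnDeriv p δ (ρ ^ (2 - p) * t) = ((δ + ρ ^ (2 - p) * t) / ρ) ^ (p - 2) * t := by
  have hpos : 0 ≤ δ + ρ ^ (2 - p) * t := by positivity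
  rw [phiFnDeriv, div_rpow hpos hρ.le, div_eq_mul_inv, show 2 - p = -(p - 2) by ring,
    rpow_neg hρ.le]
  ring

lemma div_mem_Icc_of_rpow_eq (hp : 1 < p) (hδ : 0 ≤ δ) {ρ t : ℝ} (hρ : 0 < ρ) (ht : 0 ≤ t)
    (hρδt : ρ ^ (p - 1) = δ ^ (p - 1) + t) :
    (δ + ρ ^ (2 - p) * t) / ρ ∈ Icc (2 ^ (p - 1)⁻¹ + 2)⁻¹ 2 := by
  have hp1 : 0 < p - 1 := by linarith
  have hρρ : ρ ^ (2 - p) * ρ ^ (p - 1) = ρ := by rw [← rpow_add hρ]; norm_num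
  have hδρ : δ ≤ ρ := (rpow_le_rpow_iff hδ hρ.le hp1).mp (by rw [hρδt]; linarith)
  have huρ : ρ ^ (2 - p) * t ≤ ρ := by
    calc ρ ^ (2 - p) * t ≤ ρ ^ (2 - p) * ρ ^ (p - 1) := by
          gcongr
          linarith [rpow_nonneg hδ (p - 1)]
      _ = ρ := hρρ
  -- `ρ ^ (p - 1)` is at most twice the larger of `δ ^ (p - 1)` and `t`
  have hρle : ρ ≤ 2 ^ (p - 1)⁻¹ * δ + 2 * (ρ ^ (2 - p) * t) := by
    rcases le_total t (δ ^ (p - 1)) with htδ | hδt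
    · have : ρ ^ (p - 1) ≤ (2 ^ (p - 1)⁻¹ * δ) ^ (p - 1) := by
        rw [mul_rpow (by positivity) hδ, ← rpow_mul zero_le_two, inv_mul_cancel₀ hp1.ne',
          rpow_one, hρδt]
        linarith
      have := (rpow_le_rpow_iff hρ.le (by positivity) hp1).mp this
      nlinarith [rpow_nonneg hρ.le (2 - p)]
    · calc ρ = ρ ^ (2 - p) * ρ ^ (p - 1) := hρρ.symm
        _ ≤ ρ ^ (2 - p) * (2 * t) := by gcongr; linarith
        _ ≤ 2 ^ (p - 1)⁻¹ * δ + 2 * (ρ ^ (2 - p) * t) := by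
          nlinarith [rpow_nonneg zero_le_two (p - 1)⁻¹]
  constructor
  · rw [inv_le_iff_one_le_mul₀ (by positivity), div_mul_eq_mul_div, le_div_iff₀ hρ, one_mul]
    nlinarith [mul_nonneg (rpow_nonneg zero_le_two (p - 1)⁻¹)
      (mul_nonneg (rpow_nonneg hρ.le (2 - p)) ht)]
  · rw [div_le_iff₀ hρ]
    linarith

lemma dualVar_eq_rpow_mul (hp : 1 < p) (hδ : 0 ≤ δ) {t : ℝ} (ht : 0 ≤ t) :
    dualVar p δ t = ((δ ^ (p - 1) + t) ^ (p - 1)⁻¹) ^ (2 - p) * t := by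
  have hp1 : p - 1 ≠ 0 := by linarith
  rw [dualVar, ← rpow_mul (by positivity)]
  congr 2
  field_simp
  ring

lemma dualVar_nonneg (hδ : 0 ≤ δ) {t : ℝ} (ht : 0 ≤ t) : 0 ≤ dualVar p δ t := by
  unfold dualVar
  positivity

end

lemma exists_phiFnDeriv_dualVar_bounds {p : ℝ} (hp : 1 < p) :
    ∃ a > 0, ∃ b > 0, ∀ δ ≥ 0, ∀ t ≥ 0,
      a * t ≤ phiFnDeriv p δ (dualVar p δ t) ∧ phiFnDeriv p δ (dualVar p δ t) ≤ b * t := by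
  set m : ℝ := (2 ^ (p - 1)⁻¹ + 2)⁻¹
  have hm : 0 < m := by positivity
  refine ⟨min (m ^ (p - 2)) (2 ^ (p - 2)), lt_min (rpow_pos_of_pos hm _) (by positivity),
    max (m ^ (p - 2)) (2 ^ (p - 2)), lt_max_of_lt_right (by positivity), fun δ hδ t ht => ?_⟩
  rcases ht.eq_or_lt with rfl | ht0
  · simp [dualVar, phiFnDeriv_zero]
  set ρ := (δ ^ (p - 1) + t) ^ (p - 1)⁻¹
  have hρ : 0 < ρ := rpow_pos_of_pos (by positivity) _
  have hx := div_mem_Icc_of_rpow_eq hp hδ hρ ht (rpow_inv_rpow (by positivity) (by linarith))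
  rw [dualVar_eq_rpow_mul hp hδ ht, phiFnDeriv_rpow_mul_eq hδ hρ ht]
  exact ⟨by gcongr; exact min_rpow_le_rpow _ hm hx.1 hx.2,
    by gcongr; exact rpow_le_max_rpow _ hm hx.1 hx.2⟩

lemma exists_dualVar_scale {p : ℝ} (hp : 1 < p) : ∃ Λ ≥ 1, ∀ δ ≥ 0, ∀ t ≥ 0,
    2 * t ≤ phiFnDeriv p δ (Λ * dualVar p δ t) ∧
      phiFnDeriv p δ (Λ⁻¹ * dualVar p δ t) ≤ t / 2 := by
  obtain ⟨a, ha, b, hb, hab⟩ := exists_phiFnDeriv_dualVar_bounds hp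
  have hr : 0 < min 1 (p - 1) := lt_min one_pos (by linarith)
  obtain ⟨Λ, hΛr, hΛ⟩ := (((tendsto_rpow_atTop hr).eventually_ge_atTop
    (max (2 / a) (2 * b))).and (eventually_ge_atTop 1)).exists
  refine ⟨Λ, hΛ, fun δ hδ t ht => ?_⟩
  obtain ⟨hlow, hup⟩ := hab δ hδ t ht
  have hu := dualVar_nonneg (p := p) hδ ht
  have hΛ0 : 0 < Λ := one_pos.trans_le hΛ
  constructor
  · have h2a : 2 ≤ Λ ^ min 1 (p - 1) * a := (div_le_iff₀ ha).mp ((le_max_left _ _).trans hΛr)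
    calc 2 * t ≤ Λ ^ min 1 (p - 1) * (a * t) := by nlinarith
      _ ≤ Λ ^ min 1 (p - 1) * phiFnDeriv p δ (dualVar p δ t) := by gcongr
      _ ≤ phiFnDeriv p δ (Λ * dualVar p δ t) := rpow_mul_phiFnDeriv_le hδ hΛ hu
  · have hΛu : 0 ≤ Λ⁻¹ * dualVar p δ t := by positivity
    have := rpow_mul_phiFnDeriv_le (p := p) hδ hΛ hΛu
    rw [mul_inv_cancel_left₀ hΛ0.ne'] at this
    nlinarith [phiFnDeriv_nonneg (p := p) hδ hΛu, le_max_right (2 / a) (2 * b)]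

theorem stmt6 (p δ : ℝ) (hp : 1 < p) (hδ : 0 ≤ δ) :
    ∃ c > (0:ℝ), ∃ C > (0:ℝ), ∀ t ≥ (0:ℝ),
      c * (δ ^ (p - 1) + t) ^ (p / (p - 1) - 2) * t ^ 2 ≤ fconj (phiFn p δ) t ∧
      fconj (phiFn p δ) t ≤ C * (δ ^ (p - 1) + t) ^ (p / (p - 1) - 2) * t ^ 2 := by
  obtain ⟨Λ, hΛ, hscale⟩ := exists_dualVar_scale hp
  have hΛ0 : 0 < Λ := one_pos.trans_le hΛ
  refine ⟨Λ⁻¹ / 2, by positivity, 2 * Λ, by positivity, fun t ht => ?_⟩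
  obtain ⟨hup, hlow⟩ := hscale δ hδ t ht
  have hu := dualVar_nonneg (p := p) hδ ht
  have hconj : ∀ s ≥ 0, s * t - phiFn p δ s ≤ 2 * (Λ * dualVar p δ t) * t :=
    fun s hs => mul_sub_phiFn_le hp hδ ht (by positivity) hup hs
  constructor
  · calc Λ⁻¹ / 2 * (δ ^ (p - 1) + t) ^ (p / (p - 1) - 2) * t ^ 2
        = Λ⁻¹ * dualVar p δ t * t / 2 := by unfold dualVar; ring
      _ ≤ Λ⁻¹ * dualVar p δ t * t - phiFn p δ (Λ⁻¹ * dualVar p δ t) :=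
        mul_div_two_le_mul_sub_phiFn hp hδ (by positivity) hlow
      _ ≤ fconj (phiFn p δ) t := le_fconj hconj (by positivity)
  · calc fconj (phiFn p δ) t ≤ 2 * (Λ * dualVar p δ t) * t := fconj_le hconj
      _ = 2 * Λ * (δ ^ (p - 1) + t) ^ (p / (p - 1) - 2) * t ^ 2 := by unfold dualVar; ring
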